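/- arXiv:1208.4749 — 6 statements merged into one kernel-verified Lean document; each statement's English description precedes it below -/
import Mathlib

section
/- Let G be a group and let H : {1} = H₀ ◁ H₁ ◁ ⋯ ◁ H_n = G and K : {1} = K₀ ◁ K₁ ◁ ⋯ ◁ K_n = G be composition series of G of the same length n. Then there exists a unique permutation π of {1,…,n} such that, for every i ∈ {1,…,n}, the quotient H_i/H_{i−1} is subnormally down-and-up projective to K_{π(i)}/K_{π(i)−1}. -/
open scoped Pointwise

/-- A composition series of `G` of length `n`: a chain `⊥ = H 0 ◁ H 1 ◁ ⋯ ◁ H n = ⊤`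
in which each member is a maximal proper normal subgroup of the next one. -/
def IsCompositionSeries {G : Type*} [Group G] {n : ℕ} (H : Fin (n + 1) → Subgroup G) : Prop :=
  H 0 = ⊥ ∧ H (Fin.last n) = ⊤ ∧
    ∀ i : Fin n,
      H i.castSucc < H i.succ ∧
      ((H i.castSucc).subgroupOf (H i.succ)).Normal ∧
      ∀ N : Subgroup G, N ≤ H i.succ → (N.subgroupOf (H i.succ)).Normal →
        H i.castSucc ≤ N → N = H i.castSucc ∨ N = H i.succ

/-- A subgroup `Y` of `G` is subnormal if there is a finite chain
`Y = Z 0 ⊴ Z 1 ⊴ ⋯ ⊴ Z m = G` with each member normal in the next one. -/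
def IsSubnormal {G : Type*} [Group G] (Y : Subgroup G) : Prop :=
  ∃ (m : ℕ) (Z : Fin (m + 1) → Subgroup G), Z 0 = Y ∧ Z (Fin.last m) = ⊤ ∧
    ∀ i : Fin m, Z i.castSucc ≤ Z i.succ ∧ ((Z i.castSucc).subgroupOf (Z i.succ)).Normal

/-- The quotient `B/A` is subnormally down-and-up projective to `D/C`: there are
subnormal subgroups `X ⊴ Y` of `G` with `AY = B`, `A ∩ Y = X`, `CY = D`, `C ∩ Y = X`. -/
def SubnormalDownUpProj {G : Type*} [Group G] (A B C D : Subgroup G) : Prop :=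
  ∃ X Y : Subgroup G, IsSubnormal X ∧ IsSubnormal Y ∧ X ≤ Y ∧ (X.subgroupOf Y).Normal ∧
    (↑A * ↑Y : Set G) = ↑B ∧ A ⊓ Y = X ∧ (↑C * ↑Y : Set G) = ↑D ∧ C ⊓ Y = X

/-!
For each `i`, the subgroups `H (i-1) ⊔ (H i ⊓ K j)`, `j = 0, …, n`, climb from `H (i-1)` to `H i`,
each normal in the next. As `H (i-1)` is maximal normal in `H i`, this chain jumps exactly once,
at some `j = π i`. By Dedekind's modular law the jump condition
`H i ⊓ K j ≰ H (i-1) ⊔ (H i ⊓ K (j-1))` is symmetric in `H` and `K`, so `π` is a permutation, and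
at a jump `X = H (i-1) ⊓ K j ⊴ Y = H i ⊓ K j` witness the projectivity. Conversely, a witness `Y`
for a projectivity onto `K (ρ i) / K (ρ i - 1)` forces the jump to occur no later than `ρ i`;
a permutation of `Fin n` that is pointwise at least `π` equals `π`.
-/

theorem Fin.exists_not_castSucc_and_succ {n : ℕ} {P : Fin (n + 1) → Prop} (h0 : ¬P 0)
    (hlast : P (Fin.last n)) : ∃ j : Fin n, ¬P j.castSucc ∧ P j.succ := by
  by_contra! h
  exact Fin.induction (motive := fun j => ¬P j) h0 h (Fin.last n) hlast

theorem Fin.le_of_not_castSucc_of_succ {n : ℕ} {P : Fin (n + 1) → Prop} (hP : Monotone P)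
    {j k : Fin n} (hj : ¬P j.castSucc) (hk : P k.succ) : j ≤ k :=
  not_lt.1 fun hkj => hj (hP (Fin.succ_le_castSucc_iff.2 hkj) hk)

theorem Equiv.eq_of_forall_apply_le {α : Type*} [Fintype α] {n : ℕ} {σ τ : α ≃ Fin n}
    (h : ∀ a, σ a ≤ τ a) : σ = τ := by
  have hsum : ∑ a, (σ a : ℕ) = ∑ a, (τ a : ℕ) := by
    rw [Equiv.sum_comp σ (fun j => (j : ℕ)), Equiv.sum_comp τ (fun j => (j : ℕ))]
  ext a
  exact (Finset.sum_eq_sum_iff_of_le fun a _ => Fin.le_def.1 (h a)).1 hsum a (Finset.mem_univ a)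

namespace Subgroup

variable {G : Type*} [Group G]

theorem sup_inf_assoc_of_le_of_le_normalizer {S T U : Subgroup G} (hTU : T ≤ U)
    (hT : T ≤ normalizer (S : Set G)) : (T ⊔ S) ⊓ U = T ⊔ (S ⊓ U) := by
  refine le_antisymm (fun x hx => ?_)
    (sup_le (le_inf le_sup_left hTU) (inf_le_inf_right U le_sup_right))
  obtain ⟨hx, hxU⟩ := mem_inf.1 hx
  rw [← SetLike.mem_coe, coe_mul_of_left_le_normalizer_right T S hT] at hx
  obtain ⟨t, ht, s, hs, rfl⟩ := hx
  have hsU : s ∈ U := by simpa using mul_mem (inv_mem (hTU ht)) hxU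
  exact mul_mem_sup ht ⟨hs, hsU⟩

theorem inf_le_sup_inf_comm {A B C D : Subgroup G} (hAB : A ≤ B) (hA : B ≤ normalizer (A : Set G))
    (hCD : C ≤ D) (hC : D ≤ normalizer (C : Set G)) :
    B ⊓ D ≤ A ⊔ (B ⊓ C) ↔ D ⊓ B ≤ C ⊔ (D ⊓ A) := by
  -- by Dedekind's law, both sides say `B ⊓ D ≤ (B ⊓ C) ⊔ (A ⊓ D)`
  have key : ∀ {A B C D : Subgroup G}, B ≤ normalizer (A : Set G) → C ≤ D →
      (B ⊓ D ≤ A ⊔ (B ⊓ C) ↔ B ⊓ D ≤ (B ⊓ C) ⊔ (A ⊓ D)) := by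
    intro A B C D hA hCD
    rw [← sup_inf_assoc_of_le_of_le_normalizer (inf_le_right.trans hCD) (inf_le_left.trans hA),
      sup_comm, le_inf_iff, and_iff_left inf_le_right]
  rw [key hA hCD, key hC hAB, sup_comm, inf_comm B, inf_comm B C, inf_comm A]

theorem sup_inf_le_normalizer_sup_inf {A B C D : Subgroup G} (hA : B ≤ normalizer (A : Set G))
    (hC : D ≤ normalizer (C : Set G)) :
    A ⊔ (B ⊓ D) ≤ normalizer ((A ⊔ (B ⊓ C) : Subgroup G) : Set G) :=
  sup_le (le_sup_left.trans le_normalizer) <|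
    (le_inf (inf_le_left.trans hA) ((inf_le_inf le_normalizer hC).trans
      inf_normalizer_le_normalizer_inf)).trans (normalizer_inf_normalizer_le_normalizer_sup _ _)

theorem le_of_coe_mul_eq {A Y B : Subgroup G} (h : (A : Set G) * Y = B) : Y ≤ B := by
  intro y hy
  rw [← SetLike.mem_coe, ← h]
  exact Set.subset_mul_right _ A.one_mem hy

end Subgroup

theorem IsSubnormal.of_subgroup_isSubnormal {G : Type*} [Group G] {Y : Subgroup G}
    (h : Y.IsSubnormal) : IsSubnormal Y := by
  obtain ⟨m, f, hf, hnormal, h0, hm⟩ := Subgroup.IsSubnormal.exists_chain h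
  exact ⟨m, fun i => f i, h0, hm, fun i => ⟨hf (Nat.le_succ i), hnormal i⟩⟩

section CompositionSeries

open Subgroup (normalizer le_normalizer)

variable {G : Type*} [Group G] {n : ℕ}

namespace IsCompositionSeries

variable {H : Fin (n + 1) → Subgroup G}

theorem lt (hH : IsCompositionSeries H) (i : Fin n) : H i.castSucc < H i.succ :=
  (hH.2.2 i).1

theorem monotone (hH : IsCompositionSeries H) : Monotone H :=
  (Fin.strictMono_iff_lt_succ.2 hH.lt).monotone

theorem le_normalizer (hH : IsCompositionSeries H) (i : Fin n) :
    H i.succ ≤ normalizer (H i.castSucc : Set G) :=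
  (Subgroup.normal_subgroupOf_iff_le_normalizer (hH.lt i).le).1 (hH.2.2 i).2.1

theorem eq_or_eq_of_le_normalizer (hH : IsCompositionSeries H) (i : Fin n) {N : Subgroup G}
    (hAN : H i.castSucc ≤ N) (hNB : N ≤ H i.succ) (hN : H i.succ ≤ normalizer (N : Set G)) :
    N = H i.castSucc ∨ N = H i.succ :=
  (hH.2.2 i).2.2 N hNB ((Subgroup.normal_subgroupOf_iff_le_normalizer hNB).2 hN) hAN

theorem isSubnormal (hH : IsCompositionSeries H) (j : Fin (n + 1)) : (H j).IsSubnormal := by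
  induction j using Fin.reverseInduction with
  | last => rw [hH.2.1]; exact .top
  | cast i ih => exact .step _ _ (hH.lt i).le ih (hH.2.2 i).2.1

end IsCompositionSeries

variable (H K : Fin (n + 1) → Subgroup G)

def CoversFactor (i : Fin n) (j : Fin (n + 1)) : Prop :=
  H i.succ ≤ H i.castSucc ⊔ (H i.succ ⊓ K j)

def JumpsAt (i j : Fin n) : Prop :=
  ¬CoversFactor H K i j.castSucc ∧ CoversFactor H K i j.succ

variable {H K}

theorem coversFactor_monotone (hK : IsCompositionSeries K) (i : Fin n) :
    Monotone (CoversFactor H K i) :=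
  fun _ _ hjk h => h.trans (sup_le_sup_left (inf_le_inf_left _ (hK.monotone hjk)) _)

theorem not_coversFactor_zero (hH : IsCompositionSeries H) (hK : IsCompositionSeries K)
    (i : Fin n) : ¬CoversFactor H K i 0 := by
  simp [CoversFactor, hK.1, (hH.lt i).not_ge]

theorem coversFactor_last (hK : IsCompositionSeries K) (i : Fin n) :
    CoversFactor H K i (Fin.last n) := by
  simp [CoversFactor, hK.2.1]

theorem CoversFactor.sup_eq (hH : IsCompositionSeries H) {i : Fin n} {j : Fin (n + 1)}
    (h : CoversFactor H K i j) : H i.castSucc ⊔ (H i.succ ⊓ K j) = H i.succ :=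
  le_antisymm (sup_le (hH.lt i).le inf_le_left) h

theorem inf_le_of_not_coversFactor (hH : IsCompositionSeries H) (hK : IsCompositionSeries K)
    {i : Fin n} {j : Fin (n + 1)} (h : ¬CoversFactor H K i j) :
    H i.succ ⊓ K j ≤ H i.castSucc := by
  -- once the chain has reached `H i.succ`, its previous term is normal in `H i.succ`,
  -- so maximality of `H i.castSucc` applies
  suffices ∀ j, CoversFactor H K i j ∨ H i.succ ⊓ K j ≤ H i.castSucc from (this j).resolve_left h
  intro j
  induction j using Fin.reverseInduction with
  | last => exact .inl (coversFactor_last hK i)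
  | cast j ih =>
    rcases ih with hcov | hle
    · have hnormal :=
        Subgroup.sup_inf_le_normalizer_sup_inf (hH.le_normalizer i) (hK.le_normalizer j)
      rw [hcov.sup_eq hH] at hnormal
      rcases hH.eq_or_eq_of_le_normalizer i le_sup_left (sup_le (hH.lt i).le inf_le_left)
        hnormal with h | h
      · exact .inr (sup_eq_left.1 h)
      · exact .inl h.ge
    · exact .inr ((inf_le_inf_left _ (hK.monotone (Fin.castSucc_le_succ j))).trans hle)

theorem exists_jumpsAt (hH : IsCompositionSeries H) (hK : IsCompositionSeries K) (i : Fin n) :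
    ∃ j, JumpsAt H K i j :=
  Fin.exists_not_castSucc_and_succ (not_coversFactor_zero hH hK i) (coversFactor_last hK i)

theorem JumpsAt.le_of_coversFactor (hK : IsCompositionSeries K) {i j k : Fin n}
    (hj : JumpsAt H K i j) (hk : CoversFactor H K i k.succ) : j ≤ k :=
  Fin.le_of_not_castSucc_of_succ (coversFactor_monotone hK i) hj.1 hk

theorem JumpsAt.unique (hK : IsCompositionSeries K) {i j k : Fin n} (hj : JumpsAt H K i j)
    (hk : JumpsAt H K i k) : j = k :=
  le_antisymm (hj.le_of_coversFactor hK hk.2) (hk.le_of_coversFactor hK hj.2)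

theorem jumpsAt_iff (hH : IsCompositionSeries H) (hK : IsCompositionSeries K) {i j : Fin n} :
    JumpsAt H K i j ↔ ¬H i.succ ⊓ K j.succ ≤ H i.castSucc ⊔ (H i.succ ⊓ K j.castSucc) := by
  refine ⟨fun ⟨hnot, hcov⟩ hle => hnot (hcov.trans (sup_le le_sup_left hle)), fun hnot => ?_⟩
  refine ⟨fun hcov => hnot (inf_le_left.trans hcov), by_contra fun hcov => hnot ?_⟩
  exact (inf_le_of_not_coversFactor hH hK hcov).trans le_sup_left

theorem JumpsAt.symm (hH : IsCompositionSeries H) (hK : IsCompositionSeries K) {i j : Fin n}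
    (h : JumpsAt H K i j) : JumpsAt K H j i := by
  rw [jumpsAt_iff hH hK] at h
  rwa [jumpsAt_iff hK hH, ← Subgroup.inf_le_sup_inf_comm (hH.lt i).le (hH.le_normalizer i)
    (hK.lt j).le (hK.le_normalizer j)]

theorem SubnormalDownUpProj.coversFactor {i j : Fin n}
    (h : SubnormalDownUpProj (H i.castSucc) (H i.succ) (K j.castSucc) (K j.succ)) :
    CoversFactor H K i j.succ := by
  obtain ⟨X, Y, -, -, -, -, hAY, -, hCY, -⟩ := h
  have hY : Y ≤ H i.succ ⊓ K j.succ :=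
    le_inf (Subgroup.le_of_coe_mul_eq hAY) (Subgroup.le_of_coe_mul_eq hCY)
  intro x hx
  rw [← SetLike.mem_coe, ← hAY] at hx
  obtain ⟨a, ha, y, hy, rfl⟩ := hx
  exact Subgroup.mul_mem_sup ha (hY hy)

theorem JumpsAt.subnormalDownUpProj (hH : IsCompositionSeries H) (hK : IsCompositionSeries K)
    {i j : Fin n} (h : JumpsAt H K i j) :
    SubnormalDownUpProj (H i.castSucc) (H i.succ) (K j.castSucc) (K j.succ) := by
  have h' := h.symm hH hK
  have hAB := (hH.lt i).le
  have hY : (H i.succ ⊓ K j.succ).IsSubnormal := (hH.isSubnormal _).inf (hK.isSubnormal _)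
  have hXY : H i.castSucc ⊓ K j.succ ≤ H i.succ ⊓ K j.succ := inf_le_inf_right _ hAB
  have hXnormal : ((H i.castSucc ⊓ K j.succ).subgroupOf (H i.succ ⊓ K j.succ)).Normal :=
    (Subgroup.normal_subgroupOf_iff_le_normalizer hXY).2 <|
      (inf_le_inf (hH.le_normalizer i) le_normalizer).trans
        Subgroup.inf_normalizer_le_normalizer_inf
  refine ⟨_, _, .of_subgroup_isSubnormal (.step _ _ hXY hY hXnormal),
    .of_subgroup_isSubnormal hY, hXY, hXnormal, ?_, ?_, ?_, ?_⟩
  · rw [← Subgroup.coe_mul_of_right_le_normalizer_left _ _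
      (inf_le_left.trans (hH.le_normalizer i)), h.2.sup_eq hH]
  · rw [← inf_assoc, inf_eq_left.2 hAB]
  · rw [inf_comm, ← Subgroup.coe_mul_of_right_le_normalizer_left _ _
      (inf_le_left.trans (hK.le_normalizer j)), h'.2.sup_eq hK]
  · have hBC := inf_le_of_not_coversFactor hH hK h.1
    have hDA := inf_le_of_not_coversFactor hK hH h'.1
    refine le_antisymm (le_inf ?_ (inf_le_right.trans inf_le_right)) (le_inf ?_ ?_)
    · exact (inf_le_inf_left _ inf_le_left).trans (inf_comm (K j.castSucc) (H i.succ) ▸ hBC)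
    · exact inf_comm (K j.succ) (H i.castSucc) ▸ hDA
    · exact inf_le_inf_right _ hAB

end CompositionSeries

/-- for composition series `H`, `K` of `G` of the same length `n`, there is a
unique permutation `π` of `{1,…,n}` such that `H i / H (i-1)` is subnormally down-and-up
projective to `K (π i) / K (π i - 1)` for all `i`. -/
theorem exists_unique_perm_subnormal_down_up_projective
    {G : Type*} [Group G] {n : ℕ} (H K : Fin (n + 1) → Subgroup G)
    (hH : IsCompositionSeries H) (hK : IsCompositionSeries K) :
    ∃! π : Equiv.Perm (Fin n), ∀ i : Fin n,
      SubnormalDownUpProj (H i.castSucc) (H i.succ) (K (π i).castSucc) (K (π i).succ) := by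
  choose p hp using exists_jumpsAt hH hK
  choose q hq using exists_jumpsAt hK hH
  let π : Equiv.Perm (Fin n) :=
    { toFun := p
      invFun := q
      left_inv := fun i => (hq (p i)).unique hH ((hp i).symm hH hK)
      right_inv := fun j => (hp (q j)).unique hK ((hq j).symm hK hH) }
  refine ⟨π, fun i => (hp i).subnormalDownUpProj hH hK, fun ρ hρ => ?_⟩
  exact (Equiv.eq_of_forall_apply_le fun i =>
    (hp i).le_of_coversFactor hK (hρ i).coversFactor).symm
end

section
/- For every slim semimodular lattice L of length n ≥ 1 there exists a permutation π of {1,…,n} such that L is order-isomorphic to the quotient G_n/β_π (the set of β_π-classes ordered by [a] ≤ [b] iff (a ⊔ b, b) ∈ β_π). -/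
/-- `p` is join-irreducible: `p ≠ ⊥` and `p = a ⊔ b` implies `p = a` or `p = b`. -/
def JoinIrred {L : Type*} [Lattice L] [OrderBot L] (p : L) : Prop :=
  p ≠ ⊥ ∧ ∀ a b : L, p = a ⊔ b → p = a ∨ p = b

/-- A lattice is slim if its join-irreducible elements contain no three-element antichain. -/
def Slim (L : Type*) [Lattice L] [OrderBot L] : Prop :=
  ¬ ∃ a b c : L, JoinIrred a ∧ JoinIrred b ∧ JoinIrred c ∧
    ¬ a ≤ b ∧ ¬ b ≤ a ∧ ¬ a ≤ c ∧ ¬ c ≤ a ∧ ¬ b ≤ c ∧ ¬ c ≤ b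

/-- A lattice is (upper) semimodular if `a ⊓ b ⋖ a` implies `b ⋖ a ⊔ b`. -/
def Semimodular (L : Type*) [Lattice L] : Prop :=
  ∀ a b : L, a ⊓ b ⋖ a → b ⋖ a ⊔ b

/-- `L` has length `n`: there is a chain `x₀ < ⋯ < x_n` and no longer chain. -/
def HasLength (L : Type*) [Preorder L] (n : ℕ) : Prop :=
  (∃ x : Fin (n + 1) → L, StrictMono x) ∧
    ∀ (m : ℕ) (x : Fin (m + 1) → L), StrictMono x → m ≤ n

/-- The square grid `G_n`: the direct product of two `(n+1)`-element chains. -/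
abbrev Grid (n : ℕ) := Fin (n + 1) × Fin (n + 1)

/-- `θ` is a join-congruence: an equivalence relation compatible with `⊔`. -/
def IsJoinCong {S : Type*} [SemilatticeSup S] (θ : S → S → Prop) : Prop :=
  Equivalence θ ∧ ∀ a b c : S, θ a b → θ (a ⊔ c) (b ⊔ c)

/-- The smallest join-congruence containing the relation `R`. -/
def joinCongGen {S : Type*} [SemilatticeSup S] (R : S → S → Prop) : S → S → Prop :=
  fun a b => ∀ θ : S → S → Prop, IsJoinCong θ → (∀ x y, R x y → θ x y) → θ a b

theorem joinCongGen_equivalence {S : Type*} [SemilatticeSup S] (R : S → S → Prop) :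
    Equivalence (joinCongGen R) where
  refl a := fun _θ hθ _ => hθ.1.refl a
  symm h := fun θ hθ hR => hθ.1.symm (h θ hθ hR)
  trans h₁ h₂ := fun θ hθ hR => hθ.1.trans (h₁ θ hθ hR) (h₂ θ hθ hR)

/-- The generating pairs of `β_π`: `((i-1, π i), (i, π i))` and `((i, π i - 1), (i, π i))`
for `i ∈ {1,…,n}` (here `i : Fin n` represents the element `i+1` of `{1,…,n}`). -/
def betaGen {n : ℕ} (π : Equiv.Perm (Fin n)) : Grid n → Grid n → Prop :=
  fun a b => ∃ i : Fin n,
    (a = (i.castSucc, (π i).succ) ∧ b = (i.succ, (π i).succ)) ∨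
    (a = (i.succ, (π i).castSucc) ∧ b = (i.succ, (π i).succ))

/-- `β_π`, the smallest join-congruence on the grid containing the pairs of `betaGen π`. -/
def beta {n : ℕ} (π : Equiv.Perm (Fin n)) : Grid n → Grid n → Prop :=
  joinCongGen (betaGen π)

/-- The setoid on the grid determined by `β_π`. -/
def betaSetoid {n : ℕ} (π : Equiv.Perm (Fin n)) : Setoid (Grid n) :=
  ⟨beta π, joinCongGen_equivalence _⟩

/-- The quotient `G_n/β_π`. -/
def QuotGrid {n : ℕ} (π : Equiv.Perm (Fin n)) := Quotient (betaSetoid π)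

/-- The order on `G_n/β_π`: `[a] ≤ [b]` iff `(a ⊔ b, b) ∈ β_π`. -/
instance QuotGrid.instLE {n : ℕ} (π : Equiv.Perm (Fin n)) : LE (QuotGrid π) :=
  ⟨fun x y => ∃ a b : Grid n,
    x = Quotient.mk (betaSetoid π) a ∧ y = Quotient.mk (betaSetoid π) b ∧ beta π (a ⊔ b) b⟩

/-!
The join-irreducibles of a slim lattice lie on two chains (Dilworth's theorem for width two). In a
finite semimodular lattice a cover lowers the coheight by exactly one, so each of these chains
extends to a maximal chain `c`, resp. `d`, of length `n`, and every element is a join `c i ⊔ d j`: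
the map `(i, j) ↦ c i ⊔ d j` is a join-homomorphism from `G_n` onto `L`. The `i`-th step of `c`
disappears when joined with a unique step `π i` of `d`; semimodularity makes this relation
symmetric, so `π` is a permutation. The kernel of the map is exactly `β_π`: it contains the
generators by the choice of `π`, and two grid points with the same image are joined by unit steps
inside their fibre, each of which is a translate of a generator.
-/

open Order

lemma Fin.castSucc_covBy_succ {n : ℕ} (i : Fin n) : i.castSucc ⋖ i.succ :=
  Fin.covBy_iff.2 (Nat.covBy_iff_add_one_eq.2 rfl)

lemma Fin.exists_castSucc_eq_succ_eq_of_covBy {n : ℕ} {a b : Fin (n + 1)} (h : a ⋖ b) :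
    ∃ k : Fin n, k.castSucc = a ∧ k.succ = b := by
  have hb : (b : ℕ) = a + 1 := (Nat.covBy_iff_add_one_eq.1 (Fin.covBy_iff.1 h)).symm
  exact ⟨⟨a, by omega⟩, rfl, Fin.ext hb.symm⟩

lemma Fin.existsUnique_succ_and_not_castSucc {n : ℕ} {P : Fin (n + 1) → Prop} (hP : Monotone P)
    (h0 : ¬P 0) (hlast : P (Fin.last n)) : ∃! j : Fin n, P j.succ ∧ ¬P j.castSucc := by
  refine existsUnique_of_exists_of_unique ?_ fun j j' hj hj' => le_antisymm ?_ ?_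
  · by_contra! h
    exact Fin.induction (motive := fun i => ¬P i) h0 (fun j hj => mt (h j) hj) (Fin.last n) hlast
  · exact not_lt.1 fun hlt => hj.2 (hP (Fin.succ_le_castSucc_iff.2 hlt) hj'.1)
  · exact not_lt.1 fun hlt => hj'.2 (hP (Fin.succ_le_castSucc_iff.2 hlt) hj.1)

section Dilworth
variable {α : Type*} [PartialOrder α]

def Set.WidthLeTwo (s : Set α) : Prop :=
  ∀ a ∈ s, ∀ b ∈ s, ∀ c ∈ s,
    IncompRel (· ≤ ·) a b → IncompRel (· ≤ ·) a c → IncompRel (· ≤ ·) b c → False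

lemma Set.WidthLeTwo.mono {s t : Set α} (hs : s.WidthLeTwo) (hts : t ⊆ s) : t.WidthLeTwo :=
  fun a ha b hb c hc => hs a (hts ha) b (hts hb) c (hts hc)

lemma IsChain.union_of_le {s t : Set α} {a : α} (hs : IsChain (· ≤ ·) s) (ht : IsChain (· ≤ ·) t)
    (hsa : ∀ x ∈ s, x ≤ a) (hat : ∀ y ∈ t, a ≤ y) : IsChain (· ≤ ·) (s ∪ t) :=
  isChain_union.2 ⟨hs, ht, fun x hx y hy _ => .inl ((hsa x hx).trans (hat y hy))⟩

lemma IsChain.le_of_mem_of_le_or_le {s : Set α} {a b x : α} (hs : IsChain (· ≤ ·) s)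
    (ha : a ∈ s) (hx : x ∈ s) (hab : ¬a ≤ b) (hxab : x ≤ a ∨ x ≤ b) : x ≤ a := by
  rcases eq_or_ne x a with rfl | hne
  · exact le_rfl
  rcases hs hx ha hne with h | h
  · exact h
  · exact hxab.resolve_right fun hxb => hab (h.trans hxb)

lemma IsChain.le_of_mem_of_le_or_le' {s : Set α} {a b x : α} (hs : IsChain (· ≤ ·) s)
    (ha : a ∈ s) (hx : x ∈ s) (hba : ¬b ≤ a) (hxab : a ≤ x ∨ b ≤ x) : a ≤ x := by
  rcases eq_or_ne a x with rfl | hne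
  · exact le_rfl
  rcases hs ha hx hne with h | h
  · exact h
  · exact hxab.resolve_right fun hbx => hba (hbx.trans h)

lemma IsChain.exists_mem_left_mem_right {A B S : Set α} {a b : α} (hA : IsChain (· ≤ ·) A)
    (hB : IsChain (· ≤ ·) B) (hAB : A ∪ B = S) (ha : a ∈ S) (hb : b ∈ S)
    (hab : IncompRel (· ≤ ·) a b) :
    ∃ P Q : Set α, IsChain (· ≤ ·) P ∧ IsChain (· ≤ ·) Q ∧ P ∪ Q = S ∧ a ∈ P ∧ b ∈ Q := by
  have hne : a ≠ b := by rintro rfl; exact hab.1 le_rfl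
  have not_both {C : Set α} (hC : IsChain (· ≤ ·) C) (haC : a ∈ C) (hbC : b ∈ C) : False :=
    (hC haC hbC hne).elim hab.1 hab.2
  rw [← hAB] at ha hb
  rcases ha with haA | haB
  · exact ⟨A, B, hA, hB, hAB, haA, hb.resolve_left (not_both hA haA)⟩
  · exact ⟨B, A, hB, hA, Set.union_comm A B ▸ hAB, haB, hb.resolve_right (not_both hB haB)⟩

/-- The chains through `a₁` in the two parts glue at `a₁`, those through `a₂` glue at `a₂`. -/
lemma Set.WidthLeTwo.exists_isChain_union_eq_of_incompRel {s : Set α} (hs : s.WidthLeTwo)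
    {a₁ a₂ : α} (ha₁ : a₁ ∈ s) (ha₂ : a₂ ∈ s) (hinc : IncompRel (· ≤ ·) a₁ a₂)
    (hD : ∃ A B : Set α, IsChain (· ≤ ·) A ∧ IsChain (· ≤ ·) B ∧
      A ∪ B = {x ∈ s | x ≤ a₁ ∨ x ≤ a₂})
    (hU : ∃ A B : Set α, IsChain (· ≤ ·) A ∧ IsChain (· ≤ ·) B ∧
      A ∪ B = {x ∈ s | a₁ ≤ x ∨ a₂ ≤ x}) :
    ∃ A B : Set α, IsChain (· ≤ ·) A ∧ IsChain (· ≤ ·) B ∧ A ∪ B = s := by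
  obtain ⟨A, B, hA, hB, hAB⟩ := hD
  obtain ⟨P, Q, hP, hQ, hPQ, ha₁P, ha₂Q⟩ :=
    hA.exists_mem_left_mem_right hB hAB ⟨ha₁, .inl le_rfl⟩ ⟨ha₂, .inr le_rfl⟩ hinc
  obtain ⟨A', B', hA', hB', hAB'⟩ := hU
  obtain ⟨P', Q', hP', hQ', hPQ', ha₁P', ha₂Q'⟩ :=
    hA'.exists_mem_left_mem_right hB' hAB' ⟨ha₁, .inl le_rfl⟩ ⟨ha₂, .inr le_rfl⟩ hinc
  refine ⟨P ∪ P', Q ∪ Q', ?_, ?_, ?_⟩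
  · refine hP.union_of_le hP' (a := a₁) (fun x hx => ?_) (fun y hy => ?_)
    · exact hP.le_of_mem_of_le_or_le ha₁P hx hinc.1 (hPQ.subset (.inl hx)).2
    · exact hP'.le_of_mem_of_le_or_le' ha₁P' hy hinc.2 (hPQ'.subset (.inl hy)).2
  · refine hQ.union_of_le hQ' (a := a₂) (fun x hx => ?_) (fun y hy => ?_)
    · exact hQ.le_of_mem_of_le_or_le ha₂Q hx hinc.2 (hPQ.subset (.inr hx)).2.symm
    · exact hQ'.le_of_mem_of_le_or_le' ha₂Q' hy hinc.1 (hPQ'.subset (.inr hy)).2.symm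
  · rw [Set.union_union_union_comm, hPQ, hPQ', ← Set.sep_or]
    refine Set.sep_eq_self_iff_mem_true.2 fun x hx => ?_
    by_contra! h
    exact hs x hx a₁ ha₁ a₂ ha₂ ⟨h.1.1, h.2.1⟩ ⟨h.1.2, h.2.2⟩ hinc

/-- Dilworth's theorem for width two, by Galvin's argument: for a maximal `t` and a minimal
`m ≤ t`, either `s \ {m, t}` is a chain, or two incomparable elements of it split `s` into the
parts below and above them, which miss `t`, resp. `m`. -/
theorem Finset.exists_isChain_union_eq (s : Finset α) (hs : (s : Set α).WidthLeTwo) :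
    ∃ A B : Set α, IsChain (· ≤ ·) A ∧ IsChain (· ≤ ·) B ∧ A ∪ B = s := by
  classical
  induction s using Finset.strongInduction with
  | H s ih =>
  rcases s.eq_empty_or_nonempty with rfl | ⟨x, hx⟩
  · exact ⟨∅, ∅, IsChain.empty, IsChain.empty, by simp⟩
  obtain ⟨t, -, ht⟩ := s.exists_le_maximal hx
  obtain ⟨m, hmt, hm⟩ := s.exists_le_minimal ht.1
  by_cases hrest : IsChain (· ≤ ·) ((s : Set α) \ {m, t})
  · refine ⟨{m, t}, (s : Set α) \ {m, t}, IsChain.pair hmt, hrest, ?_⟩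
    exact Set.union_sdiff_cancel (Set.insert_subset hm.1 (Set.singleton_subset_iff.2 ht.1))
  obtain ⟨a₁, ha₁, ha₁m, ha₁t, a₂, ha₂, ha₂m, ha₂t, -, h₁₂, h₂₁⟩ :
      ∃ a₁ ∈ s, a₁ ≠ m ∧ a₁ ≠ t ∧ ∃ a₂ ∈ s, a₂ ≠ m ∧ a₂ ≠ t ∧ a₁ ≠ a₂ ∧ ¬a₁ ≤ a₂ ∧ ¬a₂ ≤ a₁ := by
    simpa [IsChain, Set.Pairwise] using hrest
  refine hs.exists_isChain_union_eq_of_incompRel ha₁ ha₂ ⟨h₁₂, h₂₁⟩ ?_ ?_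
  · have htD : t ∉ s.filter fun x => x ≤ a₁ ∨ x ≤ a₂ := by
      simp only [Finset.mem_filter, not_and, not_or]
      exact fun _ =>
        ⟨fun h => ha₁t (ht.eq_of_le ha₁ h).symm, fun h => ha₂t (ht.eq_of_le ha₂ h).symm⟩
    simpa using ih _ ⟨Finset.filter_subset _ _, fun h => htD (h ht.1)⟩
      (hs.mono (Finset.coe_subset.2 (Finset.filter_subset _ _)))
  · have hmU : m ∉ s.filter fun x => a₁ ≤ x ∨ a₂ ≤ x := by
      simp only [Finset.mem_filter, not_and, not_or]
      exact fun _ => ⟨fun h => ha₁m (hm.eq_of_le ha₁ h), fun h => ha₂m (hm.eq_of_le ha₂ h)⟩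
    simpa using ih _ ⟨Finset.filter_subset _ _, fun h => hmU (h hm.1)⟩
      (hs.mono (Finset.coe_subset.2 (Finset.filter_subset _ _)))

end Dilworth

section Graded
variable {L : Type*} [Lattice L] [IsUpperModularLattice L]

lemma CovBy.covBy_sup_of_le_of_not_le {u v a : L} (huv : u ⋖ v) (hua : u ≤ a) (hva : ¬v ≤ a) :
    a ⋖ a ⊔ v := by
  have hinf : v ⊓ a = u :=
    (huv.eq_or_eq (le_inf huv.le hua) inf_le_left).resolve_right fun h => hva (h ▸ inf_le_right)
  exact sup_comm v a ▸ covBy_sup_of_inf_covBy_left (hinf ▸ huv)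

/-- Two distinct upper covers `v`, `w` of `u` are both covered by `v ⊔ w`, so by induction from
the top they have the same coheight. -/
theorem CovBy.coheight_eq_coheight_add_one [Finite L] {u v : L} (h : u ⋖ v) :
    coheight u = coheight v + 1 := by
  induction u using WellFoundedGT.induction generalizing v with
  | _ u ih =>
  refine le_antisymm ?_ (coheight_add_one_le h.lt)
  rw [coheight_eq_iSup_gt_coheight]
  refine iSup₂_le fun y hy => add_le_add_left ?_ 1
  obtain ⟨w, huw, hwy⟩ := exists_covBy_le_of_lt hy
  refine (coheight_anti hwy).trans_eq ?_
  rcases eq_or_ne w v with rfl | hwv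
  · rfl
  have hvw : ¬v ≤ w := fun hle => hwv ((huw.eq_or_eq h.le hle).resolve_left h.lt.ne').symm
  have hwv : ¬w ≤ v := fun hle => hwv ((h.eq_or_eq huw.le hle).resolve_left huw.lt.ne')
  rw [ih w huw.lt (h.covBy_sup_of_le_of_not_le huw.le hvw),
    ih v h.lt (huw.covBy_sup_of_le_of_not_le h.le hwv), sup_comm]

end Graded

structure IsCoveringChain {L : Type*} [PartialOrder L] [BoundedOrder L] {k : ℕ}
    (c : Fin (k + 1) → L) : Prop where
  apply_zero : c 0 = ⊥
  apply_last : c (Fin.last k) = ⊤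
  covBy : ∀ i : Fin k, c i.castSucc ⋖ c i.succ

namespace IsCoveringChain

lemma strictMono {L : Type*} [PartialOrder L] [BoundedOrder L] {k : ℕ} {c : Fin (k + 1) → L}
    (hc : IsCoveringChain c) : StrictMono c :=
  Fin.strictMono_iff_lt_succ.2 fun i => (hc.covBy i).lt

lemma monotone {L : Type*} [PartialOrder L] [BoundedOrder L] {k : ℕ} {c : Fin (k + 1) → L}
    (hc : IsCoveringChain c) : Monotone c :=
  hc.strictMono.monotone

variable {L : Type*} [Lattice L] [BoundedOrder L] {k : ℕ} {c : Fin (k + 1) → L}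

lemma coheight_apply [IsUpperModularLattice L] [Finite L] (hc : IsCoveringChain c)
    (i : Fin (k + 1)) : coheight (c i) = (k - i : ℕ) := by
  induction i using Fin.reverseInduction with
  | last => simp [hc.apply_last]
  | cast i ih =>
    rw [(hc.covBy i).coheight_eq_coheight_add_one, ih, Fin.val_succ, Fin.val_castSucc]
    norm_cast
    omega

lemma length_eq [IsUpperModularLattice L] [Finite L] {n : ℕ} (hlen : HasLength L n)
    (hc : IsCoveringChain c) : k = n := by
  obtain ⟨x, hx⟩ := hlen.1
  have hn := length_le_coheight (x := c 0) (p := LTSeries.mk n x hx) (hc.apply_zero ▸ bot_le)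
  rw [hc.coheight_apply 0] at hn
  exact le_antisymm (hlen.2 k c hc.strictMono) (by simpa using hn)

end IsCoveringChain

theorem IsChain.exists_isCoveringChain {L : Type*} [PartialOrder L] [BoundedOrder L] [Fintype L]
    {A : Set L} (hA : IsChain (· ≤ ·) A) :
    ∃ (k : ℕ) (c : Fin (k + 1) → L), IsCoveringChain c ∧ A ⊆ Set.range c := by
  classical
  obtain ⟨F, hAF⟩ := hA.exists_subset_flag
  obtain ⟨k, hk⟩ := Nat.exists_eq_add_one_of_ne_zero (Fintype.card_ne_zero (α := F))
  let e := monoEquivOfFin F hk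
  refine ⟨k, fun i => e i, ⟨?_, ?_, fun i => ?_⟩, fun x hx => ⟨e.symm ⟨x, hAF hx⟩, by simp⟩⟩
  · exact congrArg Subtype.val e.map_bot
  · rw [← Fin.top_eq_last]
    exact congrArg Subtype.val e.map_top
  · exact Flag.coe_covBy_coe.2 ((apply_covBy_apply_iff e).2 (Fin.castSucc_covBy_succ i))

section JordanHolder
variable {L : Type*} [Lattice L] {n : ℕ}

def AbsorbedAt (c d : Fin (n + 1) → L) (i j : Fin n) : Prop :=
  c i.succ ≤ c i.castSucc ⊔ d j.succ ∧ ¬c i.succ ≤ c i.castSucc ⊔ d j.castSucc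

variable {c d : Fin (n + 1) → L}

lemma AbsorbedAt.succ_le {i j : Fin n} (h : AbsorbedAt c d i j) (hd : Monotone d)
    {k : Fin (n + 1)} (hk : c i.succ ≤ c i.castSucc ⊔ d k) : j.succ ≤ k :=
  not_lt.1 fun hlt => h.2 (hk.trans (sup_le_sup_left (hd (Fin.le_castSucc_iff.2 hlt)) _))

/-- `a := c i ⊔ d j` is covered both by `a ⊔ c (i + 1)` and by `a ⊔ d (j + 1)`, and the first lies
below the second, so they coincide. -/
theorem AbsorbedAt.symm [IsUpperModularLattice L] (hc : ∀ i : Fin n, c i.castSucc ⋖ c i.succ)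
    (hd : ∀ j : Fin n, d j.castSucc ⋖ d j.succ) {i j : Fin n} (h : AbsorbedAt c d i j) :
    AbsorbedAt d c j i := by
  obtain ⟨hle, hnle⟩ := h
  set a := c i.castSucc ⊔ d j.castSucc
  have hd_nle : ¬d j.succ ≤ a := fun h => hnle (hle.trans (sup_le le_sup_left h))
  have hca : a ⋖ a ⊔ c i.succ := (hc i).covBy_sup_of_le_of_not_le le_sup_left hnle
  have hda : a ⋖ a ⊔ d j.succ := (hd j).covBy_sup_of_le_of_not_le le_sup_right hd_nle
  have heq : a ⊔ c i.succ = a ⊔ d j.succ :=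
    (hda.eq_or_eq hca.le (sup_le le_sup_left (hle.trans (sup_le_sup_right le_sup_left _)))
      ).resolve_left hca.lt.ne'
  refine ⟨le_sup_right.trans (heq.symm.trans_le ?_), fun h => hd_nle (h.trans_eq (sup_comm _ _))⟩
  exact sup_le (sup_le ((hc i).le.trans le_sup_right) le_sup_left) le_sup_right

variable [BoundedOrder L]

theorem existsUnique_absorbedAt (hc : IsCoveringChain c) (hd : IsCoveringChain d) (i : Fin n) :
    ∃! j, AbsorbedAt c d i j :=
  Fin.existsUnique_succ_and_not_castSucc (P := fun j => c i.succ ≤ c i.castSucc ⊔ d j)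
    (fun _ _ h hle => hle.trans (sup_le_sup_left (hd.monotone h) _))
    (by simpa [hd.apply_zero] using (hc.covBy i).lt.not_ge)
    (by simp [hd.apply_last])

variable [IsUpperModularLattice L]

/-- The Jordan–Hölder permutation of the maximal chains `c` and `d`. -/
noncomputable def jhPerm (hc : IsCoveringChain c) (hd : IsCoveringChain d) :
    Equiv.Perm (Fin n) where
  toFun i := (existsUnique_absorbedAt hc hd i).exists.choose
  invFun j := (existsUnique_absorbedAt hd hc j).exists.choose
  left_inv i := (existsUnique_absorbedAt hd hc _).unique
    (existsUnique_absorbedAt hd hc _).exists.choose_spec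
    ((existsUnique_absorbedAt hc hd i).exists.choose_spec.symm hc.covBy hd.covBy)
  right_inv j := (existsUnique_absorbedAt hc hd _).unique
    (existsUnique_absorbedAt hc hd _).exists.choose_spec
    ((existsUnique_absorbedAt hd hc j).exists.choose_spec.symm hd.covBy hc.covBy)

lemma absorbedAt_jhPerm (hc : IsCoveringChain c) (hd : IsCoveringChain d) (i : Fin n) :
    AbsorbedAt c d i (jhPerm hc hd i) :=
  (existsUnique_absorbedAt hc hd i).exists.choose_spec

lemma absorbedAt_jhPerm_symm (hc : IsCoveringChain c) (hd : IsCoveringChain d) (j : Fin n) :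
    AbsorbedAt d c j ((jhPerm hc hd).symm j) :=
  (existsUnique_absorbedAt hd hc j).exists.choose_spec

end JordanHolder

section Beta
variable {n : ℕ} (π : Equiv.Perm (Fin n))

lemma beta_equivalence : Equivalence (beta π) :=
  joinCongGen_equivalence _

lemma beta_sup_of_betaGen {a b : Grid n} (h : betaGen π a b) (e : Grid n) :
    beta π (a ⊔ e) (b ⊔ e) :=
  fun _ hθ hgen => hθ.2 a b e (hgen a b h)

lemma beta_castSucc_succ_left (i : Fin n) {j : Fin (n + 1)} (h : (π i).succ ≤ j) :
    beta π (i.castSucc, j) (i.succ, j) := by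
  have := beta_sup_of_betaGen π ⟨i, .inl ⟨rfl, rfl⟩⟩ (i.castSucc, j)
  rwa [Prod.mk_sup_mk, Prod.mk_sup_mk, sup_idem, sup_eq_right.2 h,
    sup_eq_left.2 (Fin.castSucc_le_succ i)] at this

lemma beta_castSucc_succ_right (j : Fin n) {i : Fin (n + 1)} (h : (π.symm j).succ ≤ i) :
    beta π (i, j.castSucc) (i, j.succ) := by
  have := beta_sup_of_betaGen π ⟨π.symm j, .inr ⟨rfl, rfl⟩⟩ (i, j.castSucc)
  rwa [Prod.mk_sup_mk, Prod.mk_sup_mk, Equiv.apply_symm_apply, sup_idem, sup_eq_right.2 h,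
    sup_eq_left.2 (Fin.castSucc_le_succ j)] at this

end Beta

lemma isJoinCong_ker {S L : Type*} [SemilatticeSup S] [SemilatticeSup L] {f : S → L}
    (hf : ∀ a b, f (a ⊔ b) = f a ⊔ f b) : IsJoinCong fun a b => f a = f b :=
  ⟨⟨fun _ => rfl, Eq.symm, Eq.trans⟩, fun a b c h => by simp only [hf, h]⟩

theorem QuotGrid.nonempty_orderIso_of_ker {L : Type*} [Lattice L] {n : ℕ}
    {π : Equiv.Perm (Fin n)} (f : Grid n → L) (hf : ∀ p q, f (p ⊔ q) = f p ⊔ f q)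
    (hsurj : Function.Surjective f) (hker : ∀ p q, beta π p q ↔ f p = f q) :
    Nonempty (L ≃o QuotGrid π) := by
  let e : QuotGrid π ≃ L := Equiv.ofBijective (Quotient.lift f fun p q => (hker p q).1)
    ⟨fun x y => Quotient.inductionOn₂ x y fun p q h => Quotient.sound ((hker p q).2 h),
      fun z => (hsurj z).elim fun p hp => ⟨Quotient.mk _ p, hp⟩⟩
  refine ⟨OrderIso.symm ⟨e, fun {x y} => ?_⟩⟩
  induction x, y using Quotient.inductionOn₂ with
  | h p q =>
  show f p ≤ f q ↔ ∃ a b, _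
  constructor
  · exact fun h => ⟨p, q, rfl, rfl, (hker _ _).2 (by rw [hf, sup_eq_right.2 h])⟩
  · rintro ⟨a, b, ha, hb, hab⟩
    rw [(hker p a).1 (Quotient.exact ha), (hker q b).1 (Quotient.exact hb), ← sup_eq_right, ← hf]
    exact (hker _ _).1 hab

section GridJoin
variable {L : Type*} [Lattice L] {n : ℕ} {c d : Fin (n + 1) → L}

def gridJoin (c d : Fin (n + 1) → L) (p : Grid n) : L := c p.1 ⊔ d p.2

lemma gridJoin_sup (hc : Monotone c) (hd : Monotone d) (p q : Grid n) :
    gridJoin c d (p ⊔ q) = gridJoin c d p ⊔ gridJoin c d q := by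
  simp only [gridJoin, Prod.fst_sup, Prod.snd_sup, hc.map_sup, hd.map_sup, sup_sup_sup_comm]

lemma gridJoin_mono (hc : Monotone c) (hd : Monotone d) : Monotone (gridJoin c d) :=
  fun _ _ h => sup_le_sup (hc h.1) (hd h.2)

variable [BoundedOrder L]

theorem gridJoin_surjective [Finite L] (hc : IsCoveringChain c) (hd : IsCoveringChain d)
    (hirr : ∀ p : L, SupIrred p → p ∈ Set.range c ∨ p ∈ Set.range d) :
    Function.Surjective (gridJoin c d) := by
  intro z
  obtain ⟨s, rfl, hs⟩ := exists_supIrred_decomposition z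
  refine Finset.sup_induction (p := (· ∈ Set.range (gridJoin c d)))
    ⟨(0, 0), by simp [gridJoin, hc.apply_zero, hd.apply_zero]⟩
    (fun _ ⟨p, hp⟩ _ ⟨q, hq⟩ => ⟨p ⊔ q, by rw [gridJoin_sup hc.monotone hd.monotone, hp, hq]⟩)
    fun b hb => ?_
  rcases hirr b (hs hb) with ⟨i, rfl⟩ | ⟨j, rfl⟩
  · exact ⟨(i, 0), by simp [gridJoin, hd.apply_zero]⟩
  · exact ⟨(0, j), by simp [gridJoin, hc.apply_zero]⟩

variable [IsUpperModularLattice L]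

lemma beta_jhPerm_of_covBy (hc : IsCoveringChain c) (hd : IsCoveringChain d) {p q : Grid n}
    (hpq : p ⋖ q) (h : gridJoin c d p = gridJoin c d q) : beta (jhPerm hc hd) p q := by
  obtain ⟨p₁, p₂⟩ := p
  obtain ⟨q₁, q₂⟩ := q
  rcases Prod.covBy_iff.1 hpq with ⟨h₁, rfl : p₂ = q₂⟩ | ⟨h₂, rfl : p₁ = q₁⟩
  · obtain ⟨k, rfl, rfl⟩ := Fin.exists_castSucc_eq_succ_eq_of_covBy h₁
    exact beta_castSucc_succ_left _ k
      ((absorbedAt_jhPerm hc hd k).succ_le hd.monotone (le_sup_left.trans h.ge))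
  · obtain ⟨k, rfl, rfl⟩ := Fin.exists_castSucc_eq_succ_eq_of_covBy h₂
    refine beta_castSucc_succ_right _ k ((absorbedAt_jhPerm_symm hc hd k).succ_le hc.monotone ?_)
    exact le_sup_right.trans (h.ge.trans_eq (sup_comm _ _))

lemma beta_jhPerm_of_le (hc : IsCoveringChain c) (hd : IsCoveringChain d) {p q : Grid n}
    (hpq : p ≤ q) (h : gridJoin c d p = gridJoin c d q) : beta (jhPerm hc hd) p q := by
  induction p using WellFoundedGT.induction with
  | _ p ih =>
  rcases hpq.eq_or_lt with rfl | hlt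
  · exact (beta_equivalence _).refl p
  obtain ⟨r, hpr, hrq⟩ := exists_covBy_le_of_lt hlt
  have hr : gridJoin c d p = gridJoin c d r :=
    le_antisymm (gridJoin_mono hc.monotone hd.monotone hpr.le)
      (h ▸ gridJoin_mono hc.monotone hd.monotone hrq)
  exact (beta_equivalence _).trans (beta_jhPerm_of_covBy hc hd hpr hr) (ih r hpr.lt hrq (hr ▸ h))

theorem beta_jhPerm_iff (hc : IsCoveringChain c) (hd : IsCoveringChain d) (p q : Grid n) :
    beta (jhPerm hc hd) p q ↔ gridJoin c d p = gridJoin c d q := by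
  refine ⟨fun h => h _ (isJoinCong_ker (gridJoin_sup hc.monotone hd.monotone)) ?_, fun h => ?_⟩
  · rintro _ _ ⟨i, ⟨rfl, rfl⟩ | ⟨rfl, rfl⟩⟩
    · exact sup_congr_right (le_sup_left.trans (sup_le_sup_right (hc.covBy i).le _))
        (absorbedAt_jhPerm hc hd i).1
    · exact sup_congr_left ((hd.covBy (jhPerm hc hd i)).le.trans le_sup_right)
        (((absorbedAt_jhPerm hc hd i).symm hc.covBy hd.covBy).1.trans_eq (sup_comm _ _))
  · have to_sup (r s : Grid n) (hrs : gridJoin c d r = gridJoin c d s) :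
        beta (jhPerm hc hd) r (r ⊔ s) :=
      beta_jhPerm_of_le hc hd le_sup_left
        (by rw [gridJoin_sup hc.monotone hd.monotone, hrs, sup_idem])
    exact (beta_equivalence _).trans (to_sup p q h)
      ((beta_equivalence _).symm (sup_comm q p ▸ to_sup q p h.symm))

end GridJoin

lemma joinIrred_iff_supIrred {L : Type*} [Lattice L] [OrderBot L] {p : L} :
    JoinIrred p ↔ SupIrred p := by
  simp only [JoinIrred, SupIrred, isMin_iff_eq_bot]
  refine and_congr Iff.rfl ⟨fun h a b hab => ?_, fun h a b hab => ?_⟩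
  · simpa only [eq_comm] using h a b hab.symm
  · simpa only [eq_comm] using h hab.symm

theorem Slim.exists_isCoveringChain_pair {L : Type*} [Lattice L] [Fintype L] [BoundedOrder L]
    [IsUpperModularLattice L] {n : ℕ} (hS : Slim L) (hlen : HasLength L n) :
    ∃ c d : Fin (n + 1) → L, IsCoveringChain c ∧ IsCoveringChain d ∧
      ∀ p : L, SupIrred p → p ∈ Set.range c ∨ p ∈ Set.range d := by
  classical
  obtain ⟨A, B, hA, hB, hAB⟩ := (Finset.univ.filter (SupIrred (α := L))).exists_isChain_union_eq
    fun a ha b hb c hc hab hac hbc => hS ⟨a, b, c, by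
      simp only [Finset.coe_filter, Finset.mem_univ, true_and, Set.mem_ofPred_eq,
        ← joinIrred_iff_supIrred] at ha hb hc
      exact ⟨ha, hb, hc, hab.1, hab.2, hac.1, hac.2, hbc.1, hbc.2⟩⟩
  obtain ⟨k, c, hc, hAc⟩ := hA.exists_isCoveringChain
  obtain ⟨l, d, hd, hBd⟩ := hB.exists_isCoveringChain
  obtain rfl := hc.length_eq hlen
  obtain rfl := hd.length_eq hlen
  refine ⟨c, d, hc, hd, fun p hp => ?_⟩
  have hpAB : p ∈ A ∪ B := hAB ▸ by simpa using hp
  exact hpAB.imp (@hAc p) (@hBd p)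

theorem slim_semimodular_iso_quotGrid_general
    {L : Type*} [Lattice L] [Fintype L] [BoundedOrder L] {n : ℕ}
    (hS : Slim L) (hM : Semimodular L) (hlen : HasLength L n) :
    ∃ π : Equiv.Perm (Fin n), Nonempty (L ≃o QuotGrid π) := by
  have : IsUpperModularLattice L := ⟨hM _ _⟩
  obtain ⟨c, d, hc, hd, hirr⟩ := hS.exists_isCoveringChain_pair hlen
  exact ⟨jhPerm hc hd, QuotGrid.nonempty_orderIso_of_ker (gridJoin c d)
    (gridJoin_sup hc.monotone hd.monotone) (gridJoin_surjective hc hd hirr) (beta_jhPerm_iff hc hd)⟩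

/-- every slim semimodular lattice of length `n ≥ 1` is order-isomorphic
to `G_n/β_π` for some permutation `π` of `{1,…,n}`. -/
theorem slim_semimodular_iso_quotGrid
    {L : Type*} [Lattice L] [Fintype L] [BoundedOrder L] {n : ℕ} (hn : 1 ≤ n)
    (hS : Slim L) (hM : Semimodular L) (hlen : HasLength L n) :
    ∃ π : Equiv.Perm (Fin n), Nonempty (L ≃o QuotGrid π) :=
  slim_semimodular_iso_quotGrid_general hS hM hlen
end

section
/- For every σ ∈ S_n, the set Seg σ of segments of σ is a partition of {1,…,n}: every element of {1,…,n} belongs to exactly one segment of σ. -/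
/-!
Call `t ≤ n` a cut of `σ` if `{x | x < t}` is closed. Since `σ` is a bijection of a finite
set, the complement of a closed set is closed, so the sections are exactly the bands
`{x | a ≤ x < b}` between two cuts `a < b`, and the segments are the bands between consecutive
cuts. The element `k` lies in the band between the largest cut `≤ k` and the smallest cut `> k`;
it lies in no other segment because two sections sharing `k` intersect in a section.
-/

/-- `I` is closed with respect to `σ`: `σ i ∈ I` for all `i ∈ I`. -/
def PermClosed {n : ℕ} (σ : Equiv.Perm (Fin n)) (I : Set (Fin n)) : Prop :=
  ∀ i ∈ I, σ i ∈ I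

/-- `I` is a section of `σ`: a nonempty interval `{u,…,v}` such that `I`, `{x | x < u}`
and `{x | v < x}` are all closed with respect to `σ`. -/
def IsSection {n : ℕ} (σ : Equiv.Perm (Fin n)) (I : Set (Fin n)) : Prop :=
  ∃ u v : Fin n, u ≤ v ∧ I = Set.Icc u v ∧
    PermClosed σ I ∧ PermClosed σ {x | x < u} ∧ PermClosed σ {x | v < x}

/-- `I` is a segment of `σ`: a section minimal with respect to inclusion. -/
def IsSegment {n : ℕ} (σ : Equiv.Perm (Fin n)) (I : Set (Fin n)) : Prop :=
  IsSection σ I ∧ ∀ J : Set (Fin n), IsSection σ J → J ⊆ I → J = I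

/-- `Seg σ`, the set of all segments of `σ`. -/
def Seg {n : ℕ} (σ : Equiv.Perm (Fin n)) : Set (Set (Fin n)) :=
  {I | IsSegment σ I}

/-- `σ` and `μ` are sectionally inverted or equal: they have the same segments and on
each segment `μ` coincides with `σ` or with `σ⁻¹`. -/
def Rho {n : ℕ} (σ μ : Equiv.Perm (Fin n)) : Prop :=
  Seg σ = Seg μ ∧ ∀ I ∈ Seg σ, (∀ i ∈ I, μ i = σ i) ∨ (∀ i ∈ I, μ i = σ⁻¹ i)

variable {n : ℕ} {σ : Equiv.Perm (Fin n)}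

theorem PermClosed.compl {A : Set (Fin n)} (h : PermClosed σ A) : PermClosed σ Aᶜ := by
  have hbij : Set.BijOn σ A A :=
    (Set.Finite.injOn_iff_bijOn_of_mapsTo (Set.toFinite A) h).mp σ.injective.injOn
  intro i hi hσi
  obtain ⟨j, hj, hji⟩ := hbij.surjOn hσi
  exact hi (σ.injective hji ▸ hj)

variable (σ) in
def IsCut (t : ℕ) : Prop := PermClosed σ {x : Fin n | x.val < t}

def band (a b : ℕ) : Set (Fin n) := {x | a ≤ x.val ∧ x.val < b}

theorem isCut_zero : IsCut σ 0 := fun _ hi => absurd hi (Nat.not_lt_zero _)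

theorem isCut_self : IsCut σ n := fun i _ => (σ i).isLt

theorem IsCut.permClosed_le {t : ℕ} (h : IsCut σ t) : PermClosed σ {x : Fin n | t ≤ x.val} := by
  simpa only [Set.compl_ofPred, not_lt] using PermClosed.compl h

theorem isSection_band {a b : ℕ} (ha : IsCut σ a) (hb : IsCut σ b) (hab : a < b) (hbn : b ≤ n) :
    IsSection σ (band a b) := by
  refine ⟨⟨a, by omega⟩, ⟨b - 1, by omega⟩, Fin.le_def.mpr (by simp only; omega), ?_,
    fun i hi => ⟨ha.permClosed_le i hi.1, hb i hi.2⟩, ?_, ?_⟩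
  · ext x; simp only [band, Set.mem_ofPred_eq, Set.mem_Icc, Fin.le_def]; omega
  · simpa only [IsCut, Fin.lt_def] using ha
  · convert hb.compl using 1
    ext x; simp only [Set.mem_ofPred_eq, Set.mem_compl_iff, Fin.lt_def]; omega

theorem IsSection.exists_band {I : Set (Fin n)} (h : IsSection σ I) :
    ∃ a b, a < b ∧ b ≤ n ∧ IsCut σ a ∧ IsCut σ b ∧ I = band a b := by
  obtain ⟨u, v, huv, rfl, -, hlt, hgt⟩ := h
  refine ⟨u, v + 1, by rw [Fin.le_def] at huv; omega, v.isLt, ?_, ?_, ?_⟩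
  · simpa only [IsCut, Fin.lt_def] using hlt
  · unfold IsCut
    convert hgt.compl using 2
    ext x; simp only [Set.mem_ofPred_eq, Set.mem_compl_iff, Fin.lt_def]; omega
  · ext x; simp only [band, Set.mem_ofPred_eq, Set.mem_Icc, Fin.le_def]; omega

theorem le_and_le_of_band_subset {a b a' b' : ℕ} (hab' : a' < b') (hb'n : b' ≤ n)
    (h : (band a' b' : Set (Fin n)) ⊆ band a b) : a ≤ a' ∧ b' ≤ b := by
  have hlow := h (show (⟨a', by omega⟩ : Fin n) ∈ band a' b' from ⟨le_rfl, hab'⟩)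
  have hhigh := h (show (⟨b' - 1, by omega⟩ : Fin n) ∈ band a' b' from
    ⟨by simp only; omega, by simp only; omega⟩)
  simp only [band, Set.mem_ofPred_eq] at hlow hhigh
  omega

theorem band_inter_band (a b a' b' : ℕ) :
    (band a b ∩ band a' b' : Set (Fin n)) = band (max a a') (min b b') := by
  ext x; simp only [band, Set.mem_inter_iff, Set.mem_ofPred_eq]; omega

theorem IsSection.inter {I J : Set (Fin n)} (hI : IsSection σ I) (hJ : IsSection σ J)
    (hIJ : (I ∩ J).Nonempty) : IsSection σ (I ∩ J) := by
  obtain ⟨k, hk⟩ := hIJ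
  obtain ⟨a, b, -, hbn, ha, hb, rfl⟩ := hI.exists_band
  obtain ⟨a', b', -, -, ha', hb', rfl⟩ := hJ.exists_band
  rw [band_inter_band] at hk ⊢
  refine isSection_band ?_ ?_ (hk.1.trans_lt hk.2) (min_le_of_left_le hbn)
  · rcases max_choice a a' with h | h <;> rwa [h]
  · rcases min_choice b b' with h | h <;> rwa [h]

theorem isSegment_band {a b : ℕ} (ha : IsCut σ a) (hb : IsCut σ b) (hab : a < b) (hbn : b ≤ n)
    (hgap : ∀ t, a < t → t < b → ¬ IsCut σ t) : IsSegment σ (band a b) := by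
  refine ⟨isSection_band ha hb hab hbn, fun J hJ hJI => ?_⟩
  obtain ⟨a', b', hab', hb'n, ha', hb', rfl⟩ := hJ.exists_band
  obtain ⟨hle, hle'⟩ := le_and_le_of_band_subset hab' hb'n hJI
  have : a' = a := by_contra fun hne => hgap a' (by omega) (by omega) ha'
  have : b' = b := by_contra fun hne => hgap b' (by omega) (by omega) hb'
  subst_vars
  rfl

theorem exists_isSegment_mem (k : Fin n) : ∃ I, IsSegment σ I ∧ k ∈ I := by
  classical
  have hcut_above : ∃ t, k.val < t ∧ IsCut σ t := ⟨n, k.isLt, isCut_self⟩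
  set a := Nat.findGreatest (IsCut σ) k
  set b := Nat.find hcut_above
  obtain ⟨hkb, hb⟩ : k.val < b ∧ IsCut σ b := Nat.find_spec hcut_above
  have hak : a ≤ k := Nat.findGreatest_le _
  have hbn : b ≤ n := Nat.find_min' hcut_above ⟨k.isLt, isCut_self⟩
  refine ⟨band a b, isSegment_band (Nat.findGreatest_spec (Nat.zero_le _) isCut_zero) hb
    (by omega) hbn fun t hat htb ht => ?_, hak, hkb⟩
  rcases le_or_gt t k with htk | htk
  · exact absurd (Nat.le_findGreatest htk ht) (by omega)
  · exact absurd (Nat.find_min' hcut_above ⟨htk, ht⟩) (by omega)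

theorem IsSegment.eq_of_mem {I J : Set (Fin n)} (hI : IsSegment σ I) (hJ : IsSegment σ J)
    {k : Fin n} (hkI : k ∈ I) (hkJ : k ∈ J) : I = J := by
  have hIJ := hI.1.inter hJ.1 ⟨k, hkI, hkJ⟩
  rw [← hI.2 _ hIJ Set.inter_subset_left, hJ.2 _ hIJ Set.inter_subset_right]

/-- the segments of `σ` form a partition of `{1,…,n}`: every element
belongs to exactly one segment. -/
theorem seg_partition {n : ℕ} (σ : Equiv.Perm (Fin n)) (k : Fin n) :
    ∃! I : Set (Fin n), IsSegment σ I ∧ k ∈ I := by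
  obtain ⟨I, hI, hkI⟩ := exists_isSegment_mem (σ := σ) k
  exact ⟨I, ⟨hI, hkI⟩, fun J ⟨hJ, hkJ⟩ => hJ.eq_of_mem hI hkJ hkI⟩
end

section
/- The relation ρ ("sectionally inverted or equal") is an equivalence relation on S_n. -/
/-!
A segment `I` of `σ` is finite and `σ`-closed, so `σ` permutes it. Hence `μ = σ` on `I` gives
`μ⁻¹ = σ⁻¹` on `I`, and `μ = σ⁻¹` on `I` gives `μ⁻¹ = σ` on `I`. Since `ρ`-related permutations
have the same segments, symmetry and transitivity of `ρ` follow segment by segment.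
-/

namespace Equiv.Perm

variable {α : Type*} {σ μ τ : Perm α} {I : Set α}

theorem eqOn_inv_of_eqOn (h : Set.EqOn μ σ I) (hI : Set.MapsTo ⇑σ⁻¹ I I) :
    Set.EqOn ⇑μ⁻¹ ⇑σ⁻¹ I := fun i hi => by
  rw [inv_eq_iff_eq, h (hI hi), coe_inv, apply_symm_apply]

theorem eqOn_inv_of_eqOn_inv (h : Set.EqOn μ ⇑σ⁻¹ I) (hI : Set.MapsTo σ I I) :
    Set.EqOn ⇑μ⁻¹ σ I := by
  simpa only [inv_inv] using eqOn_inv_of_eqOn h (by rwa [inv_inv])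

def EqOnOrInvOn (I : Set α) (σ μ : Perm α) : Prop :=
  Set.EqOn μ σ I ∨ Set.EqOn μ ⇑σ⁻¹ I

theorem EqOnOrInvOn.symm (hI : Set.MapsTo σ I I) (h : EqOnOrInvOn I σ μ) :
    EqOnOrInvOn I μ σ :=
  h.imp Set.EqOn.symm fun h => (eqOn_inv_of_eqOn_inv h hI).symm

theorem EqOnOrInvOn.trans [Finite I] (hI : Set.MapsTo σ I I) (h₁ : EqOnOrInvOn I σ μ)
    (h₂ : EqOnOrInvOn I μ τ) : EqOnOrInvOn I σ τ := by
  rcases h₁ with h₁ | h₁ <;> rcases h₂ with h₂ | h₂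
  · exact Or.inl (h₂.trans h₁)
  · exact Or.inr (h₂.trans (eqOn_inv_of_eqOn h₁ (perm_symm_mapsTo_of_mapsTo σ hI)))
  · exact Or.inr (h₂.trans h₁)
  · exact Or.inl (h₂.trans (eqOn_inv_of_eqOn_inv h₁ hI))

end Equiv.Perm

open Equiv.Perm

theorem IsSection.mapsTo {n : ℕ} {σ : Equiv.Perm (Fin n)} {I : Set (Fin n)}
    (h : IsSection σ I) : Set.MapsTo σ I I := by
  obtain ⟨_, _, _, _, hclosed, _⟩ := h
  exact hclosed

theorem rho_iff {n : ℕ} {σ μ : Equiv.Perm (Fin n)} :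
    Rho σ μ ↔ Seg σ = Seg μ ∧ ∀ I ∈ Seg σ, EqOnOrInvOn I σ μ :=
  Iff.rfl

/-- `ρ` ("sectionally inverted or equal") is an equivalence relation
on the set of permutations of `{1,…,n}`. -/
theorem rho_equivalence {n : ℕ} : Equivalence (Rho (n := n)) := by
  refine ⟨fun _ => ⟨rfl, fun _ _ => Or.inl fun _ _ => rfl⟩, ?symm, ?trans⟩
  case symm =>
    rintro σ μ ⟨hseg, hagree⟩
    refine rho_iff.2 ⟨hseg.symm, fun I hI => ?_⟩
    rw [← hseg] at hI
    exact EqOnOrInvOn.symm hI.1.mapsTo (hagree I hI)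
  case trans =>
    rintro σ μ τ ⟨hseg₁, hagree₁⟩ ⟨hseg₂, hagree₂⟩
    refine rho_iff.2 ⟨hseg₁.trans hseg₂, fun I hI => ?_⟩
    exact EqOnOrInvOn.trans hI.1.mapsTo (hagree₁ I hI) (hagree₂ I (hseg₁ ▸ hI))
end

section
/- Let L be a slim semimodular lattice of length n ≥ 1, and let C = {⊥ = c₀ ⋖ c₁ ⋖ ⋯ ⋖ c_n = ⊤} and D = {⊥ = d₀ ⋖ d₁ ⋖ ⋯ ⋖ d_n = ⊤} be maximal chains of L such that every join-irreducible element of L belongs to C ∪ D. Then for each i ∈ {1,…,n} there exists a unique meet-irreducible element u of L such that c_i is the smallest element of C ∖ ↓u (where ↓u = {x : x ≤ u}); moreover, the map π₂ : {1,…,n} → {1,…,n} defined by letting d_{π₂(i)} be the smallest element of D ∖ ↓u for this u is a well-defined permutation of {1,…,n}. -/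
/-- `u` is meet-irreducible: `u ≠ ⊤` and `u = a ⊓ b` implies `u = a` or `u = b`. -/
def MeetIrred {L : Type*} [Lattice L] [OrderTop L] (u : L) : Prop :=
  u ≠ ⊤ ∧ ∀ a b : L, u = a ⊓ b → u = a ∨ u = b

/-- `x` is the smallest element of the chain (range of) `e` not lying below `u`. -/
def SmallestOutside {L : Type*} [Lattice L] {n : ℕ} (e : Fin (n + 1) → L) (u x : L) : Prop :=
  ¬ x ≤ u ∧ ∀ k : Fin (n + 1), ¬ e k ≤ u → x ≤ e k

/-!
Separating the cover `cᵢ₋₁ ⋖ cᵢ` by a maximal element `u` with `cᵢ₋₁ ≤ u`, `cᵢ ≰ u` gives a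
meet-irreducible `u`. Since all join-irreducibles lie on `C ∪ D`, every element is of the form
`cₐ ⊔ d_b`, so the candidates for `u` are the elements `cᵢ₋₁ ⊔ d_b` and form a chain. If
`u < v` were two of them, semimodularity makes `cᵢ ⊔ u` a cover of `u`; it is the unique cover
of the meet-irreducible `u`, hence lies below `v`, contradicting `cᵢ ≰ v`. The same uniqueness
with the roles of `C` and `D` exchanged makes `i ↦ π₂ i` injective, hence a permutation.
-/

section Chain

variable {L : Type*} [Preorder L] {n : ℕ} {e : Fin (n + 1) → L} {u : L}

lemma exists_castSucc_le_not_succ_le (h0 : e 0 ≤ u) (hlast : ¬ e (Fin.last n) ≤ u) :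
    ∃ k : Fin n, e k.castSucc ≤ u ∧ ¬ e k.succ ≤ u := by
  by_contra! hstep
  exact hlast (Fin.induction h0 hstep (Fin.last n))

lemma eq_of_castSucc_le_not_succ_le (he : Monotone e) {i j : Fin n}
    (hi : e i.castSucc ≤ u ∧ ¬ e i.succ ≤ u) (hj : e j.castSucc ≤ u ∧ ¬ e j.succ ≤ u) :
    i = j := by
  rcases lt_trichotomy i j with h | h | h
  · exact (hi.2 ((he (Fin.succ_le_castSucc_iff.mpr h)).trans hj.1)).elim
  · exact h
  · exact (hj.2 ((he (Fin.succ_le_castSucc_iff.mpr h)).trans hi.1)).elim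

end Chain

lemma smallestOutside_succ_iff {L : Type*} [Lattice L] {n : ℕ} {e : Fin (n + 1) → L}
    (he : StrictMono e) {u : L} {i : Fin n} :
    SmallestOutside e u (e i.succ) ↔ e i.castSucc ≤ u ∧ ¬ e i.succ ≤ u := by
  refine ⟨fun ⟨hout, hmin⟩ => ⟨?_, hout⟩, fun ⟨hle, hout⟩ => ⟨hout, fun k hk => ?_⟩⟩
  · by_contra h
    exact (hmin _ h).not_gt (he i.castSucc_lt_succ)
  · rcases le_or_gt k i.castSucc with hki | hki
    · exact (hk ((he.monotone hki).trans hle)).elim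
    · exact he.monotone (Fin.castSucc_lt_iff_succ_le.mp hki)

section MeetIrred

variable {L : Type*} [Lattice L]

lemma MeetIrred.covBy_unique [OrderTop L] {u s t : L} (hu : MeetIrred u) (hs : u ⋖ s)
    (ht : u ⋖ t) : s = t := by
  rcases hs.eq_or_eq (le_inf hs.le ht.le) inf_le_left with h | h
  · rcases hu.2 s t h.symm with h' | h'
    exacts [(hs.ne h').elim, (ht.ne h').elim]
  · exact (ht.eq_or_eq hs.le (h ▸ inf_le_right)).resolve_left hs.ne'

lemma exists_meetIrred_le_not_le [Finite L] [OrderTop L] {a b : L} (hba : ¬ b ≤ a) :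
    ∃ u : L, MeetIrred u ∧ a ≤ u ∧ ¬ b ≤ u := by
  obtain ⟨u, -, ⟨hau, hbu⟩, hmax⟩ :=
    Finite.exists_le_maximal (p := fun x : L => a ≤ x ∧ ¬ b ≤ x) ⟨le_rfl, hba⟩
  have hb : ∀ x, u < x → b ≤ x := fun x hx => by
    by_contra hbx
    exact hx.not_ge (hmax ⟨hau.trans hx.le, hbx⟩ hx.le)
  refine ⟨u, ⟨fun h => hbu (h ▸ le_top), fun x y hxy => ?_⟩, hau, hbu⟩
  by_contra! hne
  have hx : u < x := lt_of_le_of_ne (hxy ▸ inf_le_left) hne.1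
  have hy : u < y := lt_of_le_of_ne (hxy ▸ inf_le_right) hne.2
  exact hbu (hxy ▸ le_inf (hb x hx) (hb y hy))

lemma MeetIrred.eq_of_le_of_not_le [OrderTop L] [WellFoundedLT L] (hM : Semimodular L)
    {a b u v : L} (hab : a ⋖ b) (hu : MeetIrred u) (hau : a ≤ u) (hbu : ¬ b ≤ u)
    (huv : u ≤ v) (hbv : ¬ b ≤ v) : u = v := by
  refine huv.eq_of_not_lt fun hlt => hbv ?_
  have hinf : b ⊓ u = a := (hab.eq_or_eq (le_inf hab.le hau) inf_le_left).resolve_right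
    fun h => hbu (h ▸ inf_le_right)
  obtain ⟨s, hus, hsv⟩ := exists_covBy_le_of_lt hlt
  have hcov : u ⋖ b ⊔ u := hM b u (hinf ▸ hab)
  exact le_sup_left.trans ((hu.covBy_unique hcov hus).le.trans hsv)

end MeetIrred

section TwoChains

variable {L : Type*} [Lattice L] {n : ℕ}

lemma SupClosed.eq_univ_of_joinIrred_mem [OrderBot L] [WellFoundedLT L] {s : Set L}
    (hs : SupClosed s) (hbot : ⊥ ∈ s) (hJ : ∀ p : L, JoinIrred p → p ∈ s) : s = Set.univ := by
  refine Set.eq_univ_of_forall fun x => WellFoundedLT.induction x fun x ih => ?_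
  by_cases hx : JoinIrred x
  · exact hJ x hx
  obtain rfl | ⟨y, z, rfl, hy, hz⟩ : x = ⊥ ∨ ∃ y z, x = y ⊔ z ∧ x ≠ y ∧ x ≠ z := by
    simpa only [JoinIrred, not_and_or, not_not, not_forall, not_or, exists_prop] using hx
  · exact hbot
  · exact hs (ih y (lt_of_le_of_ne le_sup_left (Ne.symm hy)))
      (ih z (lt_of_le_of_ne le_sup_right (Ne.symm hz)))

lemma supClosed_sup_of_monotone {c d : Fin (n + 1) → L} (hc : Monotone c) (hd : Monotone d) :
    SupClosed {x | ∃ a b, x = c a ⊔ d b} := by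
  rintro _ ⟨a, b, rfl⟩ _ ⟨a', b', rfl⟩
  exact ⟨a ⊔ a', b ⊔ b', by rw [hc.map_sup, hd.map_sup, sup_sup_sup_comm]⟩

lemma exists_eq_sup_of_joinIrred_mem [OrderBot L] [WellFoundedLT L] {c d : Fin (n + 1) → L}
    (hc : Monotone c) (hd : Monotone d) (hc0 : c 0 = ⊥) (hd0 : d 0 = ⊥)
    (hJ : ∀ p : L, JoinIrred p → (∃ k, p = c k) ∨ (∃ k, p = d k)) (x : L) :
    ∃ a b, x = c a ⊔ d b := by
  have hs := (supClosed_sup_of_monotone hc hd).eq_univ_of_joinIrred_mem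
    ⟨0, 0, by simp [hc0, hd0]⟩ fun p hp => (hJ p hp).elim (fun ⟨k, hk⟩ => ⟨k, 0, by simp [hk, hd0]⟩)
      fun ⟨k, hk⟩ => ⟨0, k, by simp [hk, hc0]⟩
  exact Set.eq_univ_iff_forall.mp hs x

lemma MeetIrred.eq_of_castSucc_le_not_succ_le [OrderTop L] [WellFoundedLT L]
    (hM : Semimodular L) {c d : Fin (n + 1) → L} (hcc : ∀ i : Fin n, c i.castSucc ⋖ c i.succ)
    (hd : Monotone d) (hcd : ∀ x, ∃ a b, x = c a ⊔ d b) {i : Fin n} {u v : L}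
    (hu : MeetIrred u) (hv : MeetIrred v) (hui : c i.castSucc ≤ u ∧ ¬ c i.succ ≤ u)
    (hvi : c i.castSucc ≤ v ∧ ¬ c i.succ ≤ v) : u = v := by
  have hc : Monotone c := (Fin.strictMono_iff_lt_succ.mpr fun i => (hcc i).lt).monotone
  have hform : ∀ w, c i.castSucc ≤ w → ¬ c i.succ ≤ w → ∃ b, w = c i.castSucc ⊔ d b := by
    intro w hw hw'
    obtain ⟨a, b, rfl⟩ := hcd w
    have ha : a ≤ i.castSucc := by
      by_contra! h
      exact hw' (le_sup_of_le_left (hc (Fin.castSucc_lt_iff_succ_le.mp h)))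
    exact ⟨b, le_antisymm (sup_le_sup_right (hc ha) _) (sup_le hw le_sup_right)⟩
  obtain ⟨b, rfl⟩ := hform u hui.1 hui.2
  obtain ⟨b', rfl⟩ := hform v hvi.1 hvi.2
  rcases le_total b b' with h | h
  · exact hu.eq_of_le_of_not_le hM (hcc i) hui.1 hui.2 (sup_le_sup_left (hd h) _) hvi.2
  · exact (hv.eq_of_le_of_not_le hM (hcc i) hvi.1 hvi.2 (sup_le_sup_left (hd h) _) hui.2).symm

end TwoChains

theorem pi_two_well_defined_general
    {L : Type*} [Lattice L] [Fintype L] [BoundedOrder L] {n : ℕ}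
    (hM : Semimodular L)
    (c d : Fin (n + 1) → L)
    (hc0 : c 0 = ⊥) (hcc : ∀ i : Fin n, c i.castSucc ⋖ c i.succ)
    (hd0 : d 0 = ⊥) (hdn : d (Fin.last n) = ⊤) (hdc : ∀ i : Fin n, d i.castSucc ⋖ d i.succ)
    (hJ : ∀ p : L, JoinIrred p → (∃ k, p = c k) ∨ (∃ k, p = d k)) :
    (∀ i : Fin n, ∃! u : L, MeetIrred u ∧ SmallestOutside c u (c i.succ)) ∧
    ∃ π : Equiv.Perm (Fin n), ∀ i : Fin n, ∃ u : L, MeetIrred u ∧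
      SmallestOutside c u (c i.succ) ∧ SmallestOutside d u (d (π i).succ) := by
  have hc : StrictMono c := Fin.strictMono_iff_lt_succ.mpr fun i => (hcc i).lt
  have hd : StrictMono d := Fin.strictMono_iff_lt_succ.mpr fun i => (hdc i).lt
  have hcd_sup := exists_eq_sup_of_joinIrred_mem hc.monotone hd.monotone hc0 hd0 hJ
  have hdc_sup : ∀ x, ∃ b a, x = d b ⊔ c a := fun x => by
    obtain ⟨a, b, hx⟩ := hcd_sup x
    exact ⟨b, a, hx.trans (sup_comm _ _)⟩
  choose u hu hcu using fun i => exists_meetIrred_le_not_le (hcc i).lt.not_ge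
  choose π hπ using fun i =>
    exists_castSucc_le_not_succ_le (e := d) (hd0 ▸ bot_le) (hdn ▸ top_le_iff.not.mpr (hu i).1)
  have hπ_inj : Function.Injective π := fun i j hij => by
    have huij : u i = u j := (hu i).eq_of_castSucc_le_not_succ_le hM hdc hc.monotone hdc_sup
      (hu j) (hπ i) (hij ▸ hπ j)
    exact eq_of_castSucc_le_not_succ_le hc.monotone (hcu i) (huij ▸ hcu j)
  have hc_out i : SmallestOutside c (u i) (c i.succ) := (smallestOutside_succ_iff hc).mpr (hcu i)
  have hd_out i : SmallestOutside d (u i) (d (π i).succ) := (smallestOutside_succ_iff hd).mpr (hπ i)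
  refine ⟨fun i => ⟨u i, ⟨hu i, hc_out i⟩, fun v ⟨hv, hvi⟩ => ?_⟩,
    Equiv.ofBijective π (Finite.injective_iff_bijective.mp hπ_inj),
    fun i => ⟨u i, hu i, hc_out i, hd_out i⟩⟩
  exact hv.eq_of_castSucc_le_not_succ_le hM hcc hd.monotone hcd_sup (hu i)
    ((smallestOutside_succ_iff hc).mp hvi) (hcu i)

/-- let `L` be a slim semimodular lattice of length `n ≥ 1` and let
`c`, `d` be maximal chains (`⊥ = c₀ ⋖ ⋯ ⋖ c_n = ⊤`, `⊥ = d₀ ⋖ ⋯ ⋖ d_n = ⊤`)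
containing all join-irreducible elements.  For each `i ∈ {1,…,n}` there is a unique
meet-irreducible `u` such that `c_i` is the smallest element of `C ∖ ↓u`; moreover
the assignment `i ↦ j`, where `d_j` is the smallest element of `D ∖ ↓u`, is a
permutation `π₂` of `{1,…,n}`. -/
theorem pi_two_well_defined
    {L : Type*} [Lattice L] [Fintype L] [BoundedOrder L] {n : ℕ} (hn : 1 ≤ n)
    (hS : Slim L) (hM : Semimodular L) (hlen : HasLength L n)
    (c d : Fin (n + 1) → L)
    (hc0 : c 0 = ⊥) (hcn : c (Fin.last n) = ⊤) (hcc : ∀ i : Fin n, c i.castSucc ⋖ c i.succ)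
    (hd0 : d 0 = ⊥) (hdn : d (Fin.last n) = ⊤) (hdc : ∀ i : Fin n, d i.castSucc ⋖ d i.succ)
    (hJ : ∀ p : L, JoinIrred p → (∃ k, p = c k) ∨ (∃ k, p = d k)) :
    (∀ i : Fin n, ∃! u : L, MeetIrred u ∧ SmallestOutside c u (c i.succ)) ∧
    ∃ π : Equiv.Perm (Fin n), ∀ i : Fin n, ∃ u : L, MeetIrred u ∧
      SmallestOutside c u (c i.succ) ∧ SmallestOutside d u (d (π i).succ) :=
  pi_two_well_defined_general hM c d hc0 hcc hd0 hdn hdc hJ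
end

section
/- Let L be a slim semimodular lattice of length n ≥ 1, and let C = {⊥ = c₀ ⋖ c₁ ⋖ ⋯ ⋖ c_n = ⊤} and D = {⊥ = d₀ ⋖ d₁ ⋖ ⋯ ⋖ d_n = ⊤} be maximal chains of L such that every join-irreducible element of L belongs to C ∪ D. Then for each i ∈ {1,…,n} there is exactly one j ∈ {1,…,n} such that c_{i−1} ⊔ d_{j−1} ≠ c_i ⊔ d_j and c_i ⊔ d_j = c_{i−1} ⊔ d_j = c_i ⊔ d_{j−1}; moreover, the map π₃ : i ↦ j so defined is a permutation of {1,…,n}. -/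
/-!
For a fixed step `c_{i-1} ⋖ c_i`, call `d_j` absorbing if `c_{i-1} ⊔ d_j = c_i ⊔ d_j`. The
absorbing elements form an up-set of the chain `d` containing `d_n = ⊤` but not `d_0 = ⊥`.
By semimodularity, the condition at `j` says exactly that `d_{j-1}` is not absorbing while `d_j`
is, so there is exactly one such `j`. The condition is symmetric in the two chains, so `i ↦ j`
is also injective, hence a permutation.
-/

section Semimodular

variable {L : Type*} [Lattice L]

def JoinCell (a a' b b' : L) : Prop :=
  a ⊔ b ≠ a' ⊔ b' ∧ a' ⊔ b' = a ⊔ b' ∧ a' ⊔ b' = a' ⊔ b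

theorem JoinCell.symm {a a' b b' : L} (h : JoinCell a a' b b') : JoinCell b b' a a' := by
  obtain ⟨hne, hb', ha'⟩ := h
  simp only [JoinCell, sup_comm b, sup_comm b']
  exact ⟨hne, ha', hb'⟩

theorem Semimodular.sup_wcovBy_sup_of_covBy (hM : Semimodular L) {a b : L} (h : a ⋖ b) (x : L) :
    a ⊔ x ⩿ b ⊔ x := by
  rcases h.wcovBy.eq_or_eq (le_inf h.le le_sup_left : a ≤ b ⊓ (a ⊔ x)) inf_le_left with
    hinf | hinf
  · have hcov : a ⊔ x ⋖ b ⊔ (a ⊔ x) := hM b (a ⊔ x) (by rwa [hinf])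
    simpa only [← sup_assoc, sup_eq_left.mpr h.le] using hcov.wcovBy
  · have hb : b ≤ a ⊔ x := inf_eq_left.mp hinf
    rw [le_antisymm (sup_le hb le_sup_right) (sup_le_sup_right h.le x)]
    exact WCovBy.refl _

theorem Semimodular.joinCell_iff (hM : Semimodular L) {a a' b b' : L} (ha : a ⋖ a')
    (hb : b ⋖ b') : JoinCell a a' b b' ↔ a ⊔ b ≠ a' ⊔ b ∧ a ⊔ b' = a' ⊔ b' := by
  constructor
  · rintro ⟨hne, hb', ha'⟩
    exact ⟨fun h => hne (h.trans ha'.symm), hb'.symm⟩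
  · rintro ⟨hne, habs⟩
    have hw : a ⊔ b ⩿ a ⊔ b' := by
      rw [sup_comm a b, sup_comm a b']
      exact hM.sup_wcovBy_sup_of_covBy hb a
    -- `a ⊔ b < a' ⊔ b ≤ a' ⊔ b' = a ⊔ b'` squeezes `a' ⊔ b` to the top of `hw`.
    have hmid : a' ⊔ b = a' ⊔ b' := by
      rcases hw.eq_or_eq (sup_le_sup_right ha.le b) (habs ▸ sup_le_sup_left hb.le a') with h | h
      · exact absurd h.symm hne
      · exact h.trans habs
    exact ⟨fun h => hne (h.trans hmid.symm), habs.symm, hmid.symm⟩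

end Semimodular

theorem Fin.existsUnique_not_castSucc_and_succ {n : ℕ} {P : Fin (n + 1) → Prop}
    (hP : Monotone P) (h0 : ¬ P 0) (hlast : P (Fin.last n)) :
    ∃! j : Fin n, ¬ P j.castSucc ∧ P j.succ := by
  obtain ⟨j, hj⟩ : ∃ j : Fin n, ¬ P j.castSucc ∧ P j.succ := by
    by_contra! hnone
    exact Fin.induction (motive := fun k => ¬ P k) h0 hnone (Fin.last n) hlast
  refine ⟨j, hj, fun k hk => ?_⟩
  rcases lt_trichotomy k j with hlt | heq | hgt
  · exact absurd (hP (Fin.succ_le_castSucc_iff.mpr hlt) hk.2) hj.1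
  · exact heq
  · exact absurd (hP (Fin.succ_le_castSucc_iff.mpr hgt) hj.2) hk.1

theorem Semimodular.existsUnique_joinCell {L : Type*} [Lattice L] [BoundedOrder L]
    (hM : Semimodular L) {a a' : L} (ha : a ⋖ a') {n : ℕ} {d : Fin (n + 1) → L}
    (hd0 : d 0 = ⊥) (hdn : d (Fin.last n) = ⊤)
    (hdc : ∀ j : Fin n, d j.castSucc ⋖ d j.succ) :
    ∃! j : Fin n, JoinCell a a' (d j.castSucc) (d j.succ) := by
  simp only [hM.joinCell_iff ha (hdc _)]
  have hd : Monotone d := Fin.monotone_iff_le_succ.mpr fun j => (hdc j).le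
  have habsorb : Monotone fun j => a ⊔ d j = a' ⊔ d j :=
    fun i j hij (habs : a ⊔ d i = a' ⊔ d i) => show a ⊔ d j = a' ⊔ d j by
      rw [← sup_eq_right.mpr (hd hij), ← sup_assoc, ← sup_assoc, habs]
  exact Fin.existsUnique_not_castSucc_and_succ habsorb
    (by simpa [hd0] using ha.ne) (by simp [hdn])

theorem pi_three_well_defined_general
    {L : Type*} [Lattice L] [BoundedOrder L] {n : ℕ}
    (hM : Semimodular L)
    (c d : Fin (n + 1) → L)
    (hc0 : c 0 = ⊥) (hcn : c (Fin.last n) = ⊤) (hcc : ∀ i : Fin n, c i.castSucc ⋖ c i.succ)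
    (hd0 : d 0 = ⊥) (hdn : d (Fin.last n) = ⊤) (hdc : ∀ i : Fin n, d i.castSucc ⋖ d i.succ) :
    (∀ i : Fin n, ∃! j : Fin n,
      c i.castSucc ⊔ d j.castSucc ≠ c i.succ ⊔ d j.succ ∧
      c i.succ ⊔ d j.succ = c i.castSucc ⊔ d j.succ ∧
      c i.succ ⊔ d j.succ = c i.succ ⊔ d j.castSucc) ∧
    ∃ π : Equiv.Perm (Fin n), ∀ i : Fin n,
      c i.castSucc ⊔ d (π i).castSucc ≠ c i.succ ⊔ d (π i).succ ∧
      c i.succ ⊔ d (π i).succ = c i.castSucc ⊔ d (π i).succ ∧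
      c i.succ ⊔ d (π i).succ = c i.succ ⊔ d (π i).castSucc := by
  have hc_cell (i : Fin n) :
      ∃! j : Fin n, JoinCell (c i.castSucc) (c i.succ) (d j.castSucc) (d j.succ) :=
    hM.existsUnique_joinCell (hcc i) hd0 hdn hdc
  have hd_cell (j : Fin n) :
      ∃! i : Fin n, JoinCell (d j.castSucc) (d j.succ) (c i.castSucc) (c i.succ) :=
    hM.existsUnique_joinCell (hdc j) hc0 hcn hcc
  refine ⟨hc_cell, ?_⟩
  choose π hπ using fun i => (hc_cell i).exists
  have hπ_inj : Function.Injective π := fun i₁ i₂ h =>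
    (hd_cell (π i₁)).unique (hπ i₁).symm (h ▸ (hπ i₂).symm)
  exact ⟨Equiv.ofBijective π (Finite.injective_iff_bijective.mp hπ_inj), hπ⟩

/-- let `L` be a slim semimodular lattice of length `n ≥ 1` and let
`c`, `d` be maximal chains containing all join-irreducible elements.  For each
`i ∈ {1,…,n}` there is exactly one `j` with
`c_{i−1} ⊔ d_{j−1} ≠ c_i ⊔ d_j = c_{i−1} ⊔ d_j = c_i ⊔ d_{j−1}`, and `i ↦ j` is a
permutation `π₃` of `{1,…,n}`. -/
theorem pi_three_well_defined
    {L : Type*} [Lattice L] [Fintype L] [BoundedOrder L] {n : ℕ} (hn : 1 ≤ n)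
    (hS : Slim L) (hM : Semimodular L) (hlen : HasLength L n)
    (c d : Fin (n + 1) → L)
    (hc0 : c 0 = ⊥) (hcn : c (Fin.last n) = ⊤) (hcc : ∀ i : Fin n, c i.castSucc ⋖ c i.succ)
    (hd0 : d 0 = ⊥) (hdn : d (Fin.last n) = ⊤) (hdc : ∀ i : Fin n, d i.castSucc ⋖ d i.succ)
    (hJ : ∀ p : L, JoinIrred p → (∃ k, p = c k) ∨ (∃ k, p = d k)) :
    (∀ i : Fin n, ∃! j : Fin n,
      c i.castSucc ⊔ d j.castSucc ≠ c i.succ ⊔ d j.succ ∧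
      c i.succ ⊔ d j.succ = c i.castSucc ⊔ d j.succ ∧
      c i.succ ⊔ d j.succ = c i.succ ⊔ d j.castSucc) ∧
    ∃ π : Equiv.Perm (Fin n), ∀ i : Fin n,
      c i.castSucc ⊔ d (π i).castSucc ≠ c i.succ ⊔ d (π i).succ ∧
      c i.succ ⊔ d (π i).succ = c i.castSucc ⊔ d (π i).succ ∧
      c i.succ ⊔ d (π i).succ = c i.succ ⊔ d (π i).castSucc :=
  pi_three_well_defined_general hM c d hc0 hcn hcc hd0 hdn hdc
end
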